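/- Let Φ be the composite quadratic pyramid mapping of the previous lemma, restricted to T̂₁. Then all second partial derivatives of Φ are constant on T̂₁ and each has Euclidean norm at most |v_P|, where v_P = v₁−v₂+v₃−v₄. In particular, if the base is a parallelogram (v_P=0) then Φ|_{T̂₁} is affine. -/
import Mathlib

noncomputable section

/-- Distortion vector `v_P = v₁ − v₂ + v₃ − v₄`. -/
def vPE (v : Fin 5 → EuclideanSpace ℝ (Fin 3)) : EuclideanSpace ℝ (Fin 3) :=
  v 0 - v 1 + v 2 - v 3

/-- The composite pyramid map on `T̂₁`. -/
def PhiT1E (v : Fin 5 → EuclideanSpace ℝ (Fin 3)) (x : Fin 3 → ℝ) :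
    EuclideanSpace ℝ (Fin 3) :=
  (x 1 - x 2 / 2) • v 2 + (1 - x 0 - x 2 / 2) • v 0 + (x 0 - x 1) • v 1 +
    x 2 • v 4 - ((x 1 - x 2 / 2) * (1 - x 0 - x 2 / 2)) • vPE v

/-- Second partial derivative `∂²Φ/∂x̂ᵢ∂x̂ⱼ`. -/
def secondPartial (Φ : (Fin 3 → ℝ) → EuclideanSpace ℝ (Fin 3))
    (i j : Fin 3) (x : Fin 3 → ℝ) : EuclideanSpace ℝ (Fin 3) :=
  fderiv ℝ (fun y => fderiv ℝ Φ y (Pi.single i 1)) x (Pi.single j 1)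

namespace Stmt18Aux

abbrev E3 := EuclideanSpace ℝ (Fin 3)
abbrev D3 := Fin 3 → ℝ

def pr (k : Fin 3) : D3 →L[ℝ] ℝ := ContinuousLinearMap.proj k

def L0 : D3 →L[ℝ] ℝ := pr 1 - (2:ℝ)⁻¹ • pr 2
def L1 : D3 →L[ℝ] ℝ := -pr 0 - (2:ℝ)⁻¹ • pr 2

lemma h2' (x : D3) : HasFDerivAt (fun y : D3 => y 2 / 2) ((2:ℝ)⁻¹ • pr 2) x := by
  have h2 : HasFDerivAt (fun y : D3 => y 2) (pr 2) x := (pr 2).hasFDerivAt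
  simpa [div_eq_mul_inv, mul_comm] using h2.const_mul (2:ℝ)⁻¹

lemma hc0 (x : D3) : HasFDerivAt (fun y : D3 => y 1 - y 2 / 2) L0 x := by
  have h1 : HasFDerivAt (fun y : D3 => y 1) (pr 1) x := (pr 1).hasFDerivAt
  exact h1.sub (h2' x)

lemma hc1 (x : D3) : HasFDerivAt (fun y : D3 => 1 - y 0 - y 2 / 2) L1 x := by
  have h0 : HasFDerivAt (fun y : D3 => y 0) (pr 0) x := (pr 0).hasFDerivAt
  have := ((hasFDerivAt_const (1:ℝ) x).sub h0).sub (h2' x)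
  rwa [zero_sub] at this

def Flin (v : Fin 5 → E3) : D3 →L[ℝ] E3 :=
  L0.smulRight (v 2) + L1.smulRight (v 0) +
    ((pr 0 - pr 1).smulRight (v 1)) + ((pr 2).smulRight (v 4))

def Dq (x : D3) : D3 →L[ℝ] ℝ :=
  (x 1 - x 2 / 2) • L1 + (1 - x 0 - x 2 / 2) • L0

lemma hPhi (v : Fin 5 → E3) (x : D3) :
    HasFDerivAt (PhiT1E v) (Flin v - (Dq x).smulRight (vPE v)) x := by
  have h01 : HasFDerivAt (fun y : D3 => y 0 - y 1) (pr 0 - pr 1) x :=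
    HasFDerivAt.sub ((pr 0).hasFDerivAt) ((pr 1).hasFDerivAt)
  have h2 : HasFDerivAt (fun y : D3 => y 2) (pr 2) x := (pr 2).hasFDerivAt
  exact (((((hc0 x).smul_const (v 2)).add ((hc1 x).smul_const (v 0))).add
      (h01.smul_const (v 1))).add (h2.smul_const (v 4))).sub
      (((hc0 x).mul (hc1 x)).smul_const (vPE v))

lemma inner_eq (v : Fin 5 → E3) (i : Fin 3) :
    (fun y => fderiv ℝ (PhiT1E v) y (Pi.single i 1)) =
      fun y : D3 => Flin v (Pi.single i 1) -
        ((y 1 - y 2 / 2) * L1 (Pi.single i 1) +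
          (1 - y 0 - y 2 / 2) * L0 (Pi.single i 1)) • vPE v := by
  funext y
  rw [(hPhi v y).fderiv]
  simp [Dq, ContinuousLinearMap.sub_apply, ContinuousLinearMap.add_apply,
    ContinuousLinearMap.smulRight_apply, ContinuousLinearMap.smul_apply,
    smul_eq_mul]

lemma second_eq (v : Fin 5 → E3) (i j : Fin 3) (x : D3) :
    secondPartial (PhiT1E v) i j x =
      -((L1 (Pi.single i 1) * L0 (Pi.single j 1) +
         L0 (Pi.single i 1) * L1 (Pi.single j 1))) • vPE v := by
  unfold secondPartial
  rw [inner_eq]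
  have h : HasFDerivAt
      (fun y : D3 => Flin v (Pi.single i 1) -
        ((y 1 - y 2 / 2) * L1 (Pi.single i 1) +
          (1 - y 0 - y 2 / 2) * L0 (Pi.single i 1)) • vPE v)
      ((0 : D3 →L[ℝ] E3) -
        ((L1 (Pi.single i 1) • L0 + L0 (Pi.single i 1) • L1).smulRight (vPE v))) x :=
    (hasFDerivAt_const _ x).sub
      ((((hc0 x).mul_const (L1 (Pi.single i 1))).add
        ((hc1 x).mul_const (L0 (Pi.single i 1)))).smul_const (vPE v))
  rw [h.fderiv]
  simp [ContinuousLinearMap.sub_apply, ContinuousLinearMap.add_apply,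
    ContinuousLinearMap.smulRight_apply, ContinuousLinearMap.smul_apply,
    smul_eq_mul, neg_smul, add_smul]

lemma L0_apply (y : D3) : L0 y = y 1 - y 2 / 2 := by
  simp [L0, pr, div_eq_mul_inv, mul_comm]

lemma L1_apply (y : D3) : L1 y = -y 0 - y 2 / 2 := by
  simp [L1, pr, div_eq_mul_inv, mul_comm]

end Stmt18Aux

open Stmt18Aux in
theorem stmt18 (v : Fin 5 → EuclideanSpace ℝ (Fin 3)) :
    -- each second partial derivative of Φ|_{T̂₁} is constant of norm ≤ |v_P|
    (∀ i j : Fin 3, ∃ u : EuclideanSpace ℝ (Fin 3),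
      (∀ x, secondPartial (PhiT1E v) i j x = u) ∧ ‖u‖ ≤ ‖vPE v‖) ∧
    -- if the base is a parallelogram then Φ|_{T̂₁} is affine
    (vPE v = 0 → ∃ (a : EuclideanSpace ℝ (Fin 3))
      (L : (Fin 3 → ℝ) →ₗ[ℝ] EuclideanSpace ℝ (Fin 3)),
      ∀ x, PhiT1E v x = a + L x) := by
  constructor
  · intro i j
    refine ⟨-((L1 (Pi.single i 1) * L0 (Pi.single j 1) +
         L0 (Pi.single i 1) * L1 (Pi.single j 1))) • vPE v,
      fun x => second_eq v i j x, ?_⟩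
    rw [norm_smul]
    have : ‖(-((L1 (Pi.single i 1) * L0 (Pi.single j 1) +
         L0 (Pi.single i 1) * L1 (Pi.single j 1))) : ℝ)‖ ≤ 1 := by
      fin_cases i <;> fin_cases j <;>
        simp [L0_apply, L1_apply, Pi.single_apply, abs_le] <;> norm_num
    calc _ ≤ 1 * ‖vPE v‖ := by
            exact mul_le_mul_of_nonneg_right this (norm_nonneg _)
      _ = ‖vPE v‖ := one_mul _
  · intro hvp
    refine ⟨v 0, ?_, ?_⟩
    · exact
        { toFun := fun x => (x 1 - x 2 / 2) • v 2 + (-x 0 - x 2 / 2) • v 0 +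
            (x 0 - x 1) • v 1 + x 2 • v 4
          map_add' := by intro a b; simp [Pi.add_apply]; module
          map_smul' := by intro c a; simp [Pi.smul_apply, smul_eq_mul]; module }
    · intro x
      simp only [PhiT1E, hvp, smul_zero, sub_zero, LinearMap.coe_mk, AddHom.coe_mk]
      module
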